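/- arXiv:1909.09997 — 2 statements merged into one kernel-verified Lean document; each statement's English description precedes it below -/
import Mathlib

section
/- Let M be a Cartesian cohomology functor for (G, Σ) with coefficients in A and let τ ∈ Σ⁻¹. For an open compact subgroup V ⊆ Σ with τ⁻¹Vτ ⊆ Σ, set W = V ∩ τVτ⁻¹ and define the Hecke operator T_V : M(V) → M(V) as the composite pr_{τ⁻¹Wτ, V, ⋆} ∘ [τ]_{W, τ⁻¹Wτ, ⋆} ∘ pr^⋆_{W, V}. Suppose V' ⊆ V are two such open compact subgroups, set W' = V' ∩ τV'τ⁻¹, and suppose there exists a finite set R ⊆ V' which is simultaneously a set of representatives for both coset spaces: V = ⨆_{x ∈ R} W x and V' = ⨆_{x ∈ R} W' x. Then pr_{V', V, ⋆} ∘ T_{V'} = T_V ∘ pr_{V', V, ⋆} as maps M(V') → M(V). -/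
/-- The conjugate subgroup `γ U γ⁻¹`. -/
def conjSub {G : Type*} [Group G] (γ : G) (U : Subgroup G) : Subgroup G :=
  U.map (MulAut.conj γ).toMonoidHom

/-- A *cohomology functor* for a group `G`, with objects the subgroups satisfying the
predicate `P` (in practice: the open compact subgroups contained in an open submonoid `Σ`),
monoid of admissible twists `S` (in practice `Σ`), and coefficients in a commutative
ring `A`.  It consists of `A`-modules `M U`, contravariant pullback maps
`pull g U V : M V →ₗ M U` (for the morphism `[g] : U → V` of `𝒫(G, Σ)`, i.e. `g ∈ S` and
`g⁻¹ U g ⊆ V`) and covariant pushforward maps `push g U V : M U →ₗ M V` (for the morphism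
`[g] : U → V` of `𝒫(G, Σ⁻¹)`, i.e. `g⁻¹ ∈ S` and `g⁻¹ U g ⊆ V`), which are functorial,
depend only on the double coset `U g V`, and satisfy `[g]^⋆ = [g⁻¹]_⋆` when
`g⁻¹ U g = V`. -/
structure CohFunctor (G : Type*) [Group G] (P : Subgroup G → Prop) (S : Set G)
    (A : Type*) [CommRing A] where
  M : Subgroup G → Type*
  addCommGroup : ∀ U, AddCommGroup (M U)
  module : ∀ U, Module A (M U)
  pull : ∀ (g : G) (U V : Subgroup G), M V →ₗ[A] M U
  push : ∀ (g : G) (U V : Subgroup G), M U →ₗ[A] M V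
  pull_id : ∀ U, P U → pull 1 U U = LinearMap.id
  push_id : ∀ U, P U → push 1 U U = LinearMap.id
  pull_comp : ∀ (g h : G) (U V W : Subgroup G), P U → P V → P W →
    g ∈ S → h ∈ S → (∀ x ∈ U, g⁻¹ * x * g ∈ V) → (∀ x ∈ V, h⁻¹ * x * h ∈ W) →
    (pull g U V).comp (pull h V W) = pull (g * h) U W
  push_comp : ∀ (g h : G) (U V W : Subgroup G), P U → P V → P W →
    g⁻¹ ∈ S → h⁻¹ ∈ S → (∀ x ∈ U, g⁻¹ * x * g ∈ V) → (∀ x ∈ V, h⁻¹ * x * h ∈ W) →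
    (push h V W).comp (push g U V) = push (g * h) U W
  pull_congr : ∀ (g u v : G) (U V : Subgroup G), P U → P V → g ∈ S →
    (∀ x ∈ U, g⁻¹ * x * g ∈ V) → u ∈ U → v ∈ V → pull (u * g * v) U V = pull g U V
  push_congr : ∀ (g u v : G) (U V : Subgroup G), P U → P V → g⁻¹ ∈ S →
    (∀ x ∈ U, g⁻¹ * x * g ∈ V) → u ∈ U → v ∈ V → push (u * g * v) U V = push g U V
  pull_eq_push : ∀ (g : G) (U V : Subgroup G), P U → P V → g ∈ S →
    conjSub g⁻¹ U = V → pull g U V = push g⁻¹ V U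

attribute [instance] CohFunctor.addCommGroup CohFunctor.module

namespace CohFunctor

variable {G : Type*} [Group G] {P : Subgroup G → Prop} {S : Set G}
  {A : Type*} [CommRing A]

/-- The Cartesian (Mackey) condition: for objects `U, U' ≤ V` and any finite set `R` of
representatives of the double cosets `U\V/U'`, the composite `pr^⋆_{U,V} ∘ pr_{U',V,⋆}`
equals the sum over `γ ∈ R` of `pr_{U_γ,U,⋆} ∘ [γ]^⋆` with `U_γ = γU'γ⁻¹ ∩ U`. -/
def IsCartesian (F : CohFunctor G P S A) : Prop :=
  ∀ (U U' V : Subgroup G), P U → P U' → P V → U ≤ V → U' ≤ V →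
    ∀ R : Finset G, (↑R : Set G) ⊆ (V : Set G) →
      (∀ v ∈ V, ∃ γ ∈ R, ∃ x ∈ U, ∃ y ∈ U', v = x * γ * y) →
      (∀ γ ∈ R, ∀ γ' ∈ R, (∃ x ∈ U, ∃ y ∈ U', γ' = x * γ * y) → γ = γ') →
      (F.pull 1 U V).comp (F.push 1 U' V) =
        ∑ γ ∈ R, (F.push 1 (conjSub γ U' ⊓ U) U).comp (F.pull γ (conjSub γ U' ⊓ U) U')

/-- The Iwasawa completion `M_Iw(K) = lim_U M(U)`, the inverse limit over the objects `U`
containing the compact subgroup `K`, with respect to the pushforward maps `pr_⋆`. -/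
def Iw (F : CohFunctor G P S A) (K : Subgroup G) :
    Submodule A (∀ U : {U : Subgroup G // P U ∧ K ≤ U}, F.M U.1) where
  carrier := {f | ∀ (U V : {U : Subgroup G // P U ∧ K ≤ U}), U.1 ≤ V.1 →
      F.push 1 U.1 V.1 (f U) = f V}
  add_mem' := by
    intro f g hf hg U V h
    simp only [Pi.add_apply, map_add, hf U V h, hg U V h]
  zero_mem' := by
    intro U V h
    simp
  smul_mem' := by
    intro c f hf U V h
    simp only [Pi.smul_apply, map_smul, hf U V h]

/-- Projection from the Iwasawa completion at `K` to the value at an object `U ⊇ K`. -/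
def IwProj (F : CohFunctor G P S A) (K U : Subgroup G) (hU : P U) (hKU : K ≤ U) :
    F.Iw K →ₗ[A] F.M U :=
  (LinearMap.proj (⟨U, hU, hKU⟩ : {U : Subgroup G // P U ∧ K ≤ U})).comp (F.Iw K).subtype

/-- The pushforward `pr_⋆ : M_Iw(K₁) → M_Iw(K₂)` on Iwasawa completions, for compact
subgroups `K₁ ≤ K₂` (restriction of compatible families). -/
def IwRes (F : CohFunctor G P S A) (K₁ K₂ : Subgroup G) (h : K₁ ≤ K₂) :
    F.Iw K₁ →ₗ[A] F.Iw K₂ where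
  toFun f := ⟨fun U => f.1 ⟨U.1, U.2.1, le_trans h U.2.2⟩, fun U V hUV =>
    f.2 ⟨U.1, U.2.1, le_trans h U.2.2⟩ ⟨V.1, V.2.1, le_trans h V.2.2⟩ hUV⟩
  map_add' f g := rfl
  map_smul' c f := rfl

end CohFunctor

/-- The Hecke operator `T_V = pr_{τ⁻¹Wτ, V, ⋆} ∘ [τ]_{W, τ⁻¹Wτ, ⋆} ∘ pr^⋆_{W, V}` on
`M(V)`, where `W = V ∩ τVτ⁻¹`; it is the operator of the double coset `V τ⁻¹ V`. -/
def heckeT {G : Type*} [Group G] {P : Subgroup G → Prop} {S : Set G}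
    {A : Type*} [CommRing A] (F : CohFunctor G P S A) (τ : G) (V : Subgroup G) :
    F.M V →ₗ[A] F.M V :=
  (F.push 1 (conjSub τ⁻¹ (V ⊓ conjSub τ V)) V).comp
    ((F.push τ (V ⊓ conjSub τ V) (conjSub τ⁻¹ (V ⊓ conjSub τ V))).comp
      (F.pull 1 (V ⊓ conjSub τ V) V))


/-!
Write `W = V ∩ τVτ⁻¹` and `W' = V' ∩ τV'τ⁻¹`. Since `R ⊆ V'` represents `W\V`, the group `V`
is the single double coset `W V'`, and a common representative argument gives `V' ∩ W = W'`.
The Cartesian property therefore reduces to the base change identity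
`pr^⋆_{W,V} ∘ pr_{V',V,⋆} = pr_{W',W,⋆} ∘ pr^⋆_{W',V'}`. Writing `T_V = [τ]_{W,V,⋆} ∘ pr^⋆_{W,V}`,
both `pr_{V',V,⋆} ∘ T_{V'}` and `T_V ∘ pr_{V',V,⋆}` then collapse to `[τ]_{W',V,⋆} ∘ pr^⋆_{W',V'}`
by functoriality of the pushforwards.
-/

section ConjSub

variable {G : Type*} [Group G]

theorem mem_conjSub {γ x : G} {U : Subgroup G} : x ∈ conjSub γ U ↔ γ⁻¹ * x * γ ∈ U := by
  rw [conjSub, Subgroup.mem_map_equiv, MulAut.conj_symm_apply]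

theorem conjSub_one (U : Subgroup G) : conjSub 1 U = U := by
  ext x; simp [mem_conjSub]

theorem conjSub_mono {γ : G} {U U' : Subgroup G} (h : U ≤ U') : conjSub γ U ≤ conjSub γ U' :=
  fun _ hx => mem_conjSub.2 (h (mem_conjSub.1 hx))

theorem conj_mem_conjSub_inv {τ x : G} {U : Subgroup G} (hx : x ∈ U) :
    τ⁻¹ * x * τ ∈ conjSub τ⁻¹ U := by
  rwa [mem_conjSub, inv_inv, show τ * (τ⁻¹ * x * τ) * τ⁻¹ = x by group]

theorem conjSub_inv_inf_conjSub_le (τ : G) (V : Subgroup G) :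
    conjSub τ⁻¹ (V ⊓ conjSub τ V) ≤ V := fun x hx => by
  have hx' := (mem_conjSub.1 (Subgroup.mem_inf.1 (mem_conjSub.1 hx)).2)
  rwa [inv_inv, show τ⁻¹ * (τ * x * τ⁻¹) * τ = x by group] at hx'

end ConjSub

theorem inf_eq_of_common_representatives {G : Type*} [Group G] {V V' W W' : Subgroup G}
    (hV'V : V' ≤ V) (hW'V' : W' ≤ V') (hW'W : W' ≤ W) (R : Set G)
    (hRV : ∀ v ∈ V, ∃! x, x ∈ R ∧ v * x⁻¹ ∈ W)
    (hRV' : ∀ v ∈ V', ∃! x, x ∈ R ∧ v * x⁻¹ ∈ W') :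
    V' ⊓ W = W' := by
  refine le_antisymm (fun w hw => ?_) (le_inf hW'V' hW'W)
  -- `w` has a representative `x` in `W'\V'`; the representative `x₁` of `1` lies in `W'`,
  -- and both represent `w` in `W\V`, so `x = x₁ ∈ W'`.
  obtain ⟨x₁, ⟨hx₁R, hx₁⟩, -⟩ := hRV' 1 V'.one_mem
  have hx₁W' : x₁ ∈ W' := by simpa using W'.inv_mem hx₁
  obtain ⟨x, ⟨hxR, hwx⟩, -⟩ := hRV' w hw.1
  obtain ⟨y, -, hy⟩ := hRV w (hV'V hw.1)
  have hxx₁ : x = x₁ :=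
    (hy x ⟨hxR, hW'W hwx⟩).trans (hy x₁ ⟨hx₁R, W.mul_mem hw.2 (W.inv_mem (hW'W hx₁W'))⟩).symm
  have hxW' : x ∈ W' := hxx₁ ▸ hx₁W'
  simpa using W'.mul_mem hwx hxW'

section Topology

variable {G : Type*} [Group G] [TopologicalSpace G] [IsTopologicalGroup G]

def IsOpenCompactIn (Sig : Set G) (U : Subgroup G) : Prop :=
  IsOpen (U : Set G) ∧ IsCompact (U : Set G) ∧ (U : Set G) ⊆ Sig

theorem isOpen_conjSub (γ : G) {U : Subgroup G} (hU : IsOpen (U : Set G)) :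
    IsOpen (conjSub γ U : Set G) := by
  have hpre : (conjSub γ U : Set G) = (fun x => γ⁻¹ * x * γ) ⁻¹' U := Set.ext fun _ => mem_conjSub
  exact hpre ▸ hU.preimage (by fun_prop)

theorem isCompact_conjSub (γ : G) {U : Subgroup G} (hU : IsCompact (U : Set G)) :
    IsCompact (conjSub γ U : Set G) := by
  rw [conjSub, Subgroup.coe_map]
  exact hU.image (f := fun x => γ * x * γ⁻¹) (by fun_prop)

theorem IsOpenCompactIn.of_le {Sig : Set G} {U V : Subgroup G} (hV : IsOpenCompactIn Sig V)
    (hU : IsOpen (U : Set G)) (hUV : U ≤ V) : IsOpenCompactIn Sig U :=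
  ⟨hU, hV.2.1.of_isClosed_subset (U.isClosed_of_isOpen hU) hUV, fun _ hx => hV.2.2 (hUV hx)⟩

theorem IsOpenCompactIn.inf_conjSub {Sig : Set G} {V : Subgroup G} (hV : IsOpenCompactIn Sig V)
    (τ : G) : IsOpenCompactIn Sig (V ⊓ conjSub τ V) :=
  hV.of_le (hV.1.inter (isOpen_conjSub τ hV.1)) inf_le_left

theorem IsOpenCompactIn.conjSub_inv_inf_conjSub {Sig : Set G} {V : Subgroup G}
    (hV : IsOpenCompactIn Sig V) {τ : G} (hVτ : (conjSub τ⁻¹ V : Set G) ⊆ Sig) :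
    IsOpenCompactIn Sig (conjSub τ⁻¹ (V ⊓ conjSub τ V)) :=
  let hW := hV.inf_conjSub τ
  ⟨isOpen_conjSub _ hW.1, isCompact_conjSub _ hW.2.1,
    fun _ hx => hVτ (conjSub_mono inf_le_left hx)⟩

end Topology

namespace CohFunctor

variable {G : Type*} [Group G] {P : Subgroup G → Prop} {S : Set G} {A : Type*} [CommRing A]

theorem IsCartesian.pull_comp_push_of_forall_eq_mul {F : CohFunctor G P S A}
    (hF : F.IsCartesian) {U U' V : Subgroup G}
    (hU : P U) (hU' : P U') (hV : P V) (hUV : U ≤ V) (hU'V : U' ≤ V)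
    (hcover : ∀ v ∈ V, ∃ x ∈ U, ∃ y ∈ U', v = x * y) :
    (F.pull 1 U V).comp (F.push 1 U' V) = (F.push 1 (U' ⊓ U) U).comp (F.pull 1 (U' ⊓ U) U') := by
  have hcover' : ∀ v ∈ V, ∃ γ ∈ ({1} : Finset G), ∃ x ∈ U, ∃ y ∈ U', v = x * γ * y := by
    intro v hv
    obtain ⟨x, hx, y, hy, rfl⟩ := hcover v hv
    exact ⟨1, Finset.mem_singleton_self 1, x, hx, y, hy, by group⟩
  rw [hF U U' V hU hU' hV hUV hU'V {1} (by simp) hcover' (by simp),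
    Finset.sum_singleton, conjSub_one]

variable (F : CohFunctor G P S A)

theorem push_comp_push_one {g : G} {U V W : Subgroup G} (hU : P U) (hV : P V) (hW : P W)
    (h1 : (1 : G) ∈ S) (hg : g⁻¹ ∈ S) (hUV : U ≤ V) (hVW : ∀ x ∈ V, g⁻¹ * x * g ∈ W) :
    (F.push g V W).comp (F.push 1 U V) = F.push g U W := by
  simpa using F.push_comp 1 g U V W hU hV hW (by simpa) hg (fun x hx => by simpa using hUV hx) hVW

theorem push_one_comp_push {g : G} {U V W : Subgroup G} (hU : P U) (hV : P V) (hW : P W)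
    (h1 : (1 : G) ∈ S) (hg : g⁻¹ ∈ S) (hUV : ∀ x ∈ U, g⁻¹ * x * g ∈ V) (hVW : V ≤ W) :
    (F.push 1 V W).comp (F.push g U V) = F.push g U W := by
  simpa using F.push_comp g 1 U V W hU hV hW hg (by simpa) hUV (fun x hx => by simpa using hVW hx)

theorem heckeT_eq_push_comp_pull {τ : G} {V : Subgroup G} (hV : P V)
    (hW : P (V ⊓ conjSub τ V)) (hWτ : P (conjSub τ⁻¹ (V ⊓ conjSub τ V)))
    (h1 : (1 : G) ∈ S) (hτ : τ⁻¹ ∈ S) :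
    heckeT F τ V = (F.push τ (V ⊓ conjSub τ V) V).comp (F.pull 1 (V ⊓ conjSub τ V) V) := by
  rw [heckeT, ← LinearMap.comp_assoc, F.push_one_comp_push hW hWτ hV h1 hτ
    (fun _ => conj_mem_conjSub_inv) (conjSub_inv_inf_conjSub_le τ V)]

theorem push_comp_heckeT_of_pull_comp_push {τ : G} {V V' : Subgroup G} (hV : P V) (hV' : P V')
    (hW : P (V ⊓ conjSub τ V)) (hW' : P (V' ⊓ conjSub τ V'))
    (hWτ : P (conjSub τ⁻¹ (V ⊓ conjSub τ V))) (hW'τ : P (conjSub τ⁻¹ (V' ⊓ conjSub τ V')))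
    (h1 : (1 : G) ∈ S) (hτ : τ⁻¹ ∈ S) (hV'V : V' ≤ V)
    (hbase : (F.pull 1 (V ⊓ conjSub τ V) V).comp (F.push 1 V' V) =
      (F.push 1 (V' ⊓ conjSub τ V') (V ⊓ conjSub τ V)).comp
        (F.pull 1 (V' ⊓ conjSub τ V') V')) :
    (F.push 1 V' V).comp (heckeT F τ V') = (heckeT F τ V).comp (F.push 1 V' V) := by
  have hW'W : V' ⊓ conjSub τ V' ≤ V ⊓ conjSub τ V := inf_le_inf hV'V (conjSub_mono hV'V)
  have hτV' : ∀ x ∈ V' ⊓ conjSub τ V', τ⁻¹ * x * τ ∈ V' :=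
    fun _ hx => conjSub_inv_inf_conjSub_le τ V' (conj_mem_conjSub_inv hx)
  have hτV : ∀ x ∈ V ⊓ conjSub τ V, τ⁻¹ * x * τ ∈ V :=
    fun _ hx => conjSub_inv_inf_conjSub_le τ V (conj_mem_conjSub_inv hx)
  rw [F.heckeT_eq_push_comp_pull hV hW hWτ h1 hτ, F.heckeT_eq_push_comp_pull hV' hW' hW'τ h1 hτ,
    LinearMap.comp_assoc, hbase, ← LinearMap.comp_assoc, ← LinearMap.comp_assoc,
    F.push_one_comp_push hW' hV' hV h1 hτ hτV' hV'V,
    F.push_comp_push_one hW' hW hV h1 hτ hW'W hτV]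

end CohFunctor

theorem stmt_7_general {G : Type*} [Group G] [TopologicalSpace G] [IsTopologicalGroup G]
    {A : Type*} [CommRing A]
    (Sig : Submonoid G)
    (F : CohFunctor G
      (fun U => IsOpen (U : Set G) ∧ IsCompact (U : Set G) ∧ (U : Set G) ⊆ (Sig : Set G))
      (Sig : Set G) A)
    (hF : F.IsCartesian)
    (τ : G) (hτ : τ⁻¹ ∈ Sig)
    (V V' : Subgroup G)
    (hV : IsOpen (V : Set G) ∧ IsCompact (V : Set G) ∧ (V : Set G) ⊆ (Sig : Set G))
    (hV' : IsOpen (V' : Set G) ∧ IsCompact (V' : Set G) ∧ (V' : Set G) ⊆ (Sig : Set G))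
    (hVτ : ((conjSub τ⁻¹ V : Subgroup G) : Set G) ⊆ (Sig : Set G))
    (hV'τ : ((conjSub τ⁻¹ V' : Subgroup G) : Set G) ⊆ (Sig : Set G))
    (hle : V' ≤ V)
    (R : Finset G) (hR : (↑R : Set G) ⊆ (V' : Set G))
    (hRV : ∀ v ∈ V, ∃! x, x ∈ R ∧ v * x⁻¹ ∈ V ⊓ conjSub τ V)
    (hRV' : ∀ v ∈ V', ∃! x, x ∈ R ∧ v * x⁻¹ ∈ V' ⊓ conjSub τ V') :
    (F.push 1 V' V).comp (heckeT F τ V') = (heckeT F τ V).comp (F.push 1 V' V) := by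
  have hV₀ : IsOpenCompactIn (Sig : Set G) V := hV
  have hV'₀ : IsOpenCompactIn (Sig : Set G) V' := hV'
  have hW'W : V' ⊓ conjSub τ V' ≤ V ⊓ conjSub τ V := inf_le_inf hle (conjSub_mono hle)
  have hinf : V' ⊓ (V ⊓ conjSub τ V) = V' ⊓ conjSub τ V' :=
    inf_eq_of_common_representatives hle inf_le_left hW'W R hRV hRV'
  have hcover : ∀ v ∈ V, ∃ x ∈ V ⊓ conjSub τ V, ∃ y ∈ V', v = x * y := by
    intro v hv
    obtain ⟨r, ⟨hrR, hvr⟩, -⟩ := hRV v hv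
    exact ⟨v * r⁻¹, hvr, r, hR hrR, by group⟩
  have hbase := hF.pull_comp_push_of_forall_eq_mul (hV₀.inf_conjSub τ) hV' hV inf_le_left hle
    hcover
  rw [hinf] at hbase
  exact F.push_comp_heckeT_of_pull_comp_push hV hV' (hV₀.inf_conjSub τ) (hV'₀.inf_conjSub τ)
    (hV₀.conjSub_inv_inf_conjSub hVτ) (hV'₀.conjSub_inv_inf_conjSub hV'τ) Sig.one_mem hτ hle hbase

/-- Let `M` be a Cartesian cohomology functor for `(G, Σ)` and `τ ∈ Σ⁻¹`.
If `V' ⊆ V` are open compact subgroups contained in `Σ` with `τ⁻¹Vτ ⊆ Σ`, `τ⁻¹V'τ ⊆ Σ`,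
and some finite `R ⊆ V'` is simultaneously a set of coset representatives for `W\V` and
`W'\V'` (where `W = V ∩ τVτ⁻¹`, `W' = V' ∩ τV'τ⁻¹`), then the Hecke operators `T_V`,
`T_{V'}` are compatible under the pushforward `pr_{V',V,⋆}`. -/
theorem stmt_7 {G : Type*} [Group G] [TopologicalSpace G] [IsTopologicalGroup G]
    {A : Type*} [CommRing A]
    (Sig : Submonoid G) (hSig : IsOpen (Sig : Set G))
    (F : CohFunctor G
      (fun U => IsOpen (U : Set G) ∧ IsCompact (U : Set G) ∧ (U : Set G) ⊆ (Sig : Set G))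
      (Sig : Set G) A)
    (hF : F.IsCartesian)
    (τ : G) (hτ : τ⁻¹ ∈ Sig)
    (V V' : Subgroup G)
    (hV : IsOpen (V : Set G) ∧ IsCompact (V : Set G) ∧ (V : Set G) ⊆ (Sig : Set G))
    (hV' : IsOpen (V' : Set G) ∧ IsCompact (V' : Set G) ∧ (V' : Set G) ⊆ (Sig : Set G))
    (hVτ : ((conjSub τ⁻¹ V : Subgroup G) : Set G) ⊆ (Sig : Set G))
    (hV'τ : ((conjSub τ⁻¹ V' : Subgroup G) : Set G) ⊆ (Sig : Set G))
    (hle : V' ≤ V)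
    (R : Finset G) (hR : (↑R : Set G) ⊆ (V' : Set G))
    (hRV : ∀ v ∈ V, ∃! x, x ∈ R ∧ v * x⁻¹ ∈ V ⊓ conjSub τ V)
    (hRV' : ∀ v ∈ V', ∃! x, x ∈ R ∧ v * x⁻¹ ∈ V' ⊓ conjSub τ V') :
    (F.push 1 V' V).comp (heckeT F τ V') = (heckeT F τ V).comp (F.push 1 V' V) :=
  stmt_7_general Sig F hF τ hτ V V' hV hV' hVτ hV'τ hle R hR hRV hRV'
end

section
/- Let F be a field and u = [[1,1],[0,1]] ∈ GL₂(F). Then: (a) if a ∈ F^×, b ∈ F are such that both q = [[a,b],[0,1]] and u⁻¹ q u are lower-triangular, then a = 1 and b = 0; (b) for every pair M₁, M₂ ∈ M₂(F) with tr M₁ = tr M₂, there exist x, y ∈ F and lower-triangular matrices L₁, L₂ ∈ M₂(F) with tr L₁ = tr L₂ such that M₁ = [[x,y],[0,0]] + L₁ and M₂ = [[x,y],[0,0]] + u L₂ u⁻¹. (Part (a) says the mirabolic subgroup of the diagonal GL₂, based at the point (1, u), has trivial stabiliser on the product of two flag varieties, and part (b) says its orbit is open.) -/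
open Matrix

lemma u_inv (F : Type*) [Field F] :
    (!![(1 : F), 1; 0, 1])⁻¹ = !![(1 : F), -1; 0, 1] := by
  apply Matrix.inv_eq_right_inv
  ext i j
  fin_cases i <;> fin_cases j <;>
    simp [Matrix.mul_apply, Fin.sum_univ_two]

/-- Let `u = [[1,1],[0,1]] ∈ GL₂(F)`.
(a) If `q = [[a,b],[0,1]]` (with `a ∈ F^×`) and `u⁻¹ q u` are both lower-triangular, then
`a = 1` and `b = 0`.
(b) For any `M₁, M₂ ∈ M₂(F)` with `tr M₁ = tr M₂` there are `x, y ∈ F` and lower-triangular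
`L₁, L₂` with `tr L₁ = tr L₂` such that `M₁ = [[x,y],[0,0]] + L₁` and
`M₂ = [[x,y],[0,0]] + u L₂ u⁻¹`. -/
theorem stmt_12 (F : Type*) [Field F] :
    (∀ a b : F, a ≠ 0 →
      (!![a, b; 0, 1] : Matrix (Fin 2) (Fin 2) F) 0 1 = 0 →
      ((!![(1 : F), 1; 0, 1])⁻¹ * !![a, b; 0, 1] * !![(1 : F), 1; 0, 1]) 0 1 = 0 →
      a = 1 ∧ b = 0) ∧
    (∀ M₁ M₂ : Matrix (Fin 2) (Fin 2) F, M₁.trace = M₂.trace →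
      ∃ (x y : F) (L₁ L₂ : Matrix (Fin 2) (Fin 2) F),
        L₁ 0 1 = 0 ∧ L₂ 0 1 = 0 ∧ L₁.trace = L₂.trace ∧
        M₁ = !![x, y; 0, 0] + L₁ ∧
        M₂ = !![x, y; 0, 0] + !![(1 : F), 1; 0, 1] * L₂ * (!![(1 : F), 1; 0, 1])⁻¹) := by
  constructor
  · intro a b _ hb hconj
    replace hb : b = 0 := by simpa using hb
    subst hb
    rw [u_inv] at hconj
    simp [Matrix.mul_apply, Fin.sum_univ_two] at hconj
    constructor
    · linear_combination hconj
    · rfl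
  · intro M₁ M₂ htr
    rw [Matrix.trace_fin_two, Matrix.trace_fin_two] at htr
    set x : F := M₂ 0 0 + M₂ 0 1 - M₂ 1 0 - M₂ 1 1 - M₁ 0 1 with hx
    refine ⟨x, M₁ 0 1, M₁ - !![x, M₁ 0 1; 0, 0],
      !![M₂ 0 0 - x - M₂ 1 0, 0; M₂ 1 0, M₂ 1 1 + M₂ 1 0], ?_, ?_, ?_, ?_, ?_⟩
    · simp
    · simp
    · rw [Matrix.trace_fin_two]
      simp only [Matrix.sub_apply]
      simp [Matrix.trace_fin_two]
      linear_combination htr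
    · abel
    · rw [u_inv]
      ext i j
      fin_cases i <;> fin_cases j <;>
        simp [Matrix.mul_apply, Fin.sum_univ_two, hx] <;> try ring
end
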